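/- arXiv:0903.0768 — 2 statements merged into one kernel-verified Lean document; each statement's English description precedes it below -/
import Mathlib

section
/- Under the hypotheses of Lemma 4.5, if a loop x = (y, r) : S¹ → M × ℝ₊ contains points t, t' with r(t) ≤ A₀ and r(t') ≥ B₀ (with 1 ≤ A₀ < B₀), and on the region M × [A₀, B₀] the pointwise norm satisfies |ẋ − b X_H(x)|² = ṙ²/r + r|ẏ − bR(y)|², then the L² norm satisfies (∫₀¹ |ẋ − b X_H(x)|² dt)^{1/2} ≥ (B₀ − A₀)/√(B₀). -/
/-!
Starting from a time where `r ≤ A₀`, let `t₁` be the first later time where `r` reaches `B₀`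
(this happens within one period) and `t₀` the last time before `t₁` where `r = A₀`. On
`[t₀, t₁]` we have `A₀ ≤ r ≤ B₀`, hence `|ṙ| ≤ √r |N| ≤ √B₀ |N|`, so by the fundamental theorem
of calculus `B₀ - A₀ ≤ ∫_{t₀}^{t₁} |ṙ| ≤ √B₀ ∫_{t₀}^{t₁} |N|`. Finally, the `L¹` norm of `N` on a
window no longer than the period is bounded by its `L²` norm over the period (Cauchy–Schwarz).
-/

open Set MeasureTheory intervalIntegral

theorem ContinuousOn.exists_first_hitting_time {f : ℝ → ℝ} {a b B : ℝ}
    (hf : ContinuousOn f (Icc a b)) (hab : a ≤ b) (ha : f a < B) (hb : B ≤ f b) :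
    ∃ t ∈ Ioc a b, f t = B ∧ ∀ s ∈ Ico a t, f s < B := by
  set S := Icc a b ∩ f ⁻¹' Ici B
  have hSbdd : BddBelow S := ⟨a, fun t ht => ht.1.1⟩
  obtain ⟨⟨hat, htb⟩, hBt⟩ : sInf S ∈ S :=
    (hf.preimage_isClosed_of_isClosed isClosed_Icc isClosed_Ici).csInf_mem
      ⟨b, ⟨hab, le_rfl⟩, hb⟩ hSbdd
  have hat' : a < sInf S := hat.lt_of_ne fun h => (h ▸ ha).not_ge hBt
  have hbelow : ∀ s ∈ Ico a (sInf S), f s < B := fun s hs =>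
    not_le.1 fun h => (csInf_le hSbdd ⟨⟨hs.1, hs.2.le.trans htb⟩, h⟩).not_gt hs.2
  refine ⟨sInf S, ⟨hat', htb⟩, le_antisymm ?_ hBt, hbelow⟩
  refine ContinuousWithinAt.closure_le (by rw [closure_Ico hat'.ne]; exact ⟨hat, le_rfl⟩)
    ((hf _ ⟨hat, htb⟩).mono (Ico_subset_Icc_self.trans (Icc_subset_Icc_right htb)))
    continuousWithinAt_const fun s hs => (hbelow s hs).le

theorem ContinuousOn.exists_last_hitting_time {f : ℝ → ℝ} {a b A : ℝ}
    (hf : ContinuousOn f (Icc a b)) (hab : a ≤ b) (ha : f a ≤ A) (hb : A < f b) :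
    ∃ t ∈ Ico a b, f t = A ∧ ∀ s ∈ Ioc t b, A < f s := by
  have hg : ContinuousOn (fun s => -f (-s)) (Icc (-b) (-a)) :=
    (hf.comp continuousOn_neg fun s hs => ⟨le_neg.2 hs.2, neg_le.1 hs.1⟩).neg
  obtain ⟨t, ⟨hbt, hta⟩, hgt, hbelow⟩ :=
    hg.exists_first_hitting_time (B := -A) (neg_le_neg hab) (by simpa using neg_lt_neg hb)
      (by simpa using neg_le_neg ha)
  refine ⟨-t, ⟨le_neg.2 hta, neg_lt.2 hbt⟩, by simpa using hgt, fun s hs => ?_⟩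
  simpa using hbelow (-s) ⟨neg_le_neg hs.2, neg_lt.2 hs.1⟩

theorem ContinuousOn.exists_crossing {f : ℝ → ℝ} {a b A B : ℝ}
    (hf : ContinuousOn f (Icc a b)) (hab : a ≤ b) (hAB : A < B) (ha : f a ≤ A)
    (hb : B ≤ f b) :
    ∃ t₀ t₁, a ≤ t₀ ∧ t₀ < t₁ ∧ t₁ ≤ b ∧ f t₀ = A ∧ f t₁ = B ∧
      ∀ t ∈ Icc t₀ t₁, f t ∈ Icc A B := by
  obtain ⟨t₁, ⟨hat₁, ht₁b⟩, hft₁, hbelow⟩ :=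
    hf.exists_first_hitting_time hab (ha.trans_lt hAB) hb
  obtain ⟨t₀, ⟨hat₀, ht₀₁⟩, hft₀, habove⟩ :=
    (hf.mono (Icc_subset_Icc_right ht₁b)).exists_last_hitting_time hat₁.le ha (hft₁ ▸ hAB)
  refine ⟨t₀, t₁, hat₀, ht₀₁, ht₁b, hft₀, hft₁, fun t ⟨h₀, h₁⟩ => ⟨?_, ?_⟩⟩
  · rcases h₀.eq_or_lt with rfl | h₀
    exacts [hft₀.ge, (habove t ⟨h₀, h₁⟩).le]
  · rcases h₁.eq_or_lt with rfl | h₁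
    exacts [hft₁.le, (hbelow t ⟨hat₀.trans h₀, h₁⟩).le]

theorem Function.Periodic.exists_crossing {f : ℝ → ℝ} {c : ℝ} (hper : Function.Periodic f c)
    (hc : 0 < c) (hf : Continuous f) {A B : ℝ} (hAB : A < B) {ta tb : ℝ} (ha : f ta ≤ A)
    (hb : B ≤ f tb) :
    ∃ t₀ t₁, t₀ < t₁ ∧ t₁ ≤ t₀ + c ∧ f t₀ = A ∧ f t₁ = B ∧
      ∀ t ∈ Icc t₀ t₁, f t ∈ Icc A B := by
  obtain ⟨tb', ⟨htab, htb'⟩, hftb⟩ := hper.exists_mem_Ico hc tb ta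
  obtain ⟨t₀, t₁, hat₀, h₀₁, h₁b, hft₀, hft₁, hbnd⟩ :=
    hf.continuousOn.exists_crossing htab hAB ha (hftb ▸ hb)
  exact ⟨t₀, t₁, h₀₁, by linarith, hft₀, hft₁, hbnd⟩

theorem sq_integral_abs_le_mul_integral_sq {g : ℝ → ℝ} {a b : ℝ} (hab : a ≤ b)
    (hg : IntervalIntegrable g volume a b)
    (hg2 : IntervalIntegrable (fun t => g t ^ 2) volume a b) :
    (∫ t in a..b, |g t|) ^ 2 ≤ (b - a) * ∫ t in a..b, g t ^ 2 := by
  rcases hab.eq_or_lt with rfl | hlt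
  · simp
  set I := ∫ t in a..b, |g t|
  have hL : 0 < b - a := sub_pos.2 hlt
  -- AM-GM, sharp when `|g| ≡ I / (b - a)`
  have hpt : ∀ t, 2 * I * |g t| - I ^ 2 / (b - a) ≤ (b - a) * g t ^ 2 := fun t => by
    have : (b - a) * g t ^ 2 - (2 * I * |g t| - I ^ 2 / (b - a))
        = ((b - a) * |g t| - I) ^ 2 / (b - a) := by
      field_simp
      rw [← sq_abs (g t)]
      ring
    linarith [div_nonneg (sq_nonneg ((b - a) * |g t| - I)) hL.le]
  calc I ^ 2 = ∫ t in a..b, (2 * I * |g t| - I ^ 2 / (b - a)) := by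
        rw [integral_sub (hg.abs.const_mul _) intervalIntegrable_const,
          intervalIntegral.integral_const_mul, intervalIntegral.integral_const, smul_eq_mul]
        field_simp
        ring
    _ ≤ ∫ t in a..b, (b - a) * g t ^ 2 :=
        integral_mono_on hab ((hg.abs.const_mul _).sub intervalIntegrable_const)
          (hg2.const_mul _) fun t _ => hpt t
    _ = (b - a) * ∫ t in a..b, g t ^ 2 := intervalIntegral.integral_const_mul _ _

theorem Function.Periodic.integral_abs_le_sqrt_integral_sq {N : ℝ → ℝ}
    (hper : Function.Periodic N 1) (hN : Continuous N) {t₀ t₁ : ℝ} (h₀₁ : t₀ ≤ t₁)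
    (h₁ : t₁ ≤ t₀ + 1) : ∫ t in t₀..t₁, |N t| ≤ √(∫ t in (0 : ℝ)..1, N t ^ 2) := by
  have hN2 : Continuous fun t => N t ^ 2 := hN.pow 2
  rw [Real.le_sqrt (integral_nonneg h₀₁ fun t _ => abs_nonneg _)
    (integral_nonneg zero_le_one fun t _ => sq_nonneg _)]
  calc (∫ t in t₀..t₁, |N t|) ^ 2 ≤ (t₁ - t₀) * ∫ t in t₀..t₁, N t ^ 2 :=
        sq_integral_abs_le_mul_integral_sq h₀₁ (hN.intervalIntegrable _ _)
          (hN2.intervalIntegrable _ _)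
    _ ≤ ∫ t in t₀..t₁, N t ^ 2 :=
        mul_le_of_le_one_left (integral_nonneg h₀₁ fun t _ => sq_nonneg _) (by linarith)
    _ ≤ ∫ t in t₀..t₀ + 1, N t ^ 2 :=
        integral_mono_interval le_rfl h₀₁ h₁ (.of_forall fun t => sq_nonneg _)
          (hN2.intervalIntegrable _ _)
    _ = ∫ t in (0 : ℝ)..1, N t ^ 2 := by
        simpa using (hper.comp (· ^ 2)).intervalIntegral_add_eq t₀ 0

theorem sub_le_integral_abs_deriv {f f' : ℝ → ℝ} {a b : ℝ} (hab : a ≤ b)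
    (hf : ∀ t ∈ uIcc a b, HasDerivAt f (f' t) t) (hf' : IntervalIntegrable f' volume a b) :
    f b - f a ≤ ∫ t in a..b, |f' t| := by
  rw [← integral_eq_sub_of_hasDerivAt hf hf']
  exact (le_abs_self _).trans (abs_integral_le_integral_abs hab)

theorem abs_le_sqrt_mul_abs_of_sq_eq {n d ρ y B : ℝ} (hρ : 0 < ρ) (hρB : ρ ≤ B) (hy : 0 ≤ y)
    (h : n ^ 2 = d ^ 2 / ρ + ρ * y) : |d| ≤ √B * |n| := by
  have hd : d ^ 2 = ρ * (n ^ 2 - ρ * y) := by rw [h]; field_simp; ring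
  have : d ^ 2 ≤ B * n ^ 2 := by
    nlinarith [mul_nonneg hρ.le (mul_nonneg hρ.le hy),
      mul_le_mul_of_nonneg_right hρB (sq_nonneg n)]
  rw [← Real.sqrt_sq_eq_abs, ← Real.sqrt_sq_eq_abs n, ← Real.sqrt_mul (hρ.le.trans hρB)]
  exact Real.sqrt_le_sqrt this

theorem stmt_5_general (r r' Y N : ℝ → ℝ) (A₀ B₀ : ℝ)
    (hAB : A₀ < B₀)
    (hrper : Function.Periodic r 1) (hNper : Function.Periodic N 1)
    (hrpos : ∀ t : ℝ, 0 < r t)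
    (hderiv : ∀ t : ℝ, HasDerivAt r (r' t) t)
    (hr'cont : Continuous r') (hNcont : Continuous N)
    (hY : ∀ t : ℝ, 0 ≤ Y t)
    (hnorm : ∀ t : ℝ, A₀ ≤ r t → r t ≤ B₀ →
      (N t) ^ 2 = (r' t) ^ 2 / r t + r t * Y t)
    (ta : ℝ) (hta : r ta ≤ A₀) (tb : ℝ) (htb : B₀ ≤ r tb) :
    (B₀ - A₀) / Real.sqrt B₀ ≤ Real.sqrt (∫ t in (0:ℝ)..1, (N t) ^ 2) := by
  have hrc : Continuous r := continuous_iff_continuousAt.2 fun t => (hderiv t).continuousAt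
  obtain ⟨t₀, t₁, h₀₁, h₁, hrt₀, hrt₁, hbnd⟩ :=
    hrper.exists_crossing one_pos hrc hAB hta htb
  have hB₀ : 0 < B₀ := (hrt₀ ▸ hrpos t₀).trans hAB
  have hpt : ∀ t ∈ Icc t₀ t₁, |r' t| ≤ √B₀ * |N t| := fun t ht =>
    abs_le_sqrt_mul_abs_of_sq_eq (hrpos t) (hbnd t ht).2 (hY t)
      (hnorm t (hbnd t ht).1 (hbnd t ht).2)
  rw [div_le_iff₀' (Real.sqrt_pos.2 hB₀)]
  calc B₀ - A₀ = r t₁ - r t₀ := by rw [hrt₀, hrt₁]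
    _ ≤ ∫ t in t₀..t₁, |r' t| :=
        sub_le_integral_abs_deriv h₀₁.le (fun t _ => hderiv t) (hr'cont.intervalIntegrable _ _)
    _ ≤ ∫ t in t₀..t₁, √B₀ * |N t| :=
        integral_mono_on h₀₁.le (hr'cont.abs.intervalIntegrable _ _)
          ((continuous_const.mul hNcont.abs).intervalIntegrable _ _) hpt
    _ = √B₀ * ∫ t in t₀..t₁, |N t| := intervalIntegral.integral_const_mul _ _
    _ ≤ √B₀ * √(∫ t in (0 : ℝ)..1, N t ^ 2) := by
        gcongr
        exact hNper.integral_abs_le_sqrt_integral_sq hNcont h₀₁.le h₁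

/-- Lemma 4.5: for a loop `x = (y, r)` (period 1) whose radial component takes a
value `≤ A₀` and a value `≥ B₀` with `1 ≤ A₀ < B₀`, if the pointwise norm `N`
of `ẋ − b X_H(x)` satisfies `N² = ṙ²/r + r·|ẏ − bR(y)|²` (the last term being
the nonnegative quantity `Y`) whenever `A₀ ≤ r ≤ B₀`, then the `L²`-norm of
`ẋ − b X_H(x)` over the loop is at least `(B₀ − A₀)/√B₀`. -/
theorem stmt_5 (r r' Y N : ℝ → ℝ) (A₀ B₀ : ℝ)
    (hA₀ : 1 ≤ A₀) (hAB : A₀ < B₀)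
    (hrper : Function.Periodic r 1) (hNper : Function.Periodic N 1)
    (hrpos : ∀ t : ℝ, 0 < r t)
    (hderiv : ∀ t : ℝ, HasDerivAt r (r' t) t)
    (hr'cont : Continuous r') (hNcont : Continuous N)
    (hY : ∀ t : ℝ, 0 ≤ Y t)
    (hnorm : ∀ t : ℝ, A₀ ≤ r t → r t ≤ B₀ →
      (N t) ^ 2 = (r' t) ^ 2 / r t + r t * Y t)
    (ta : ℝ) (hta : r ta ≤ A₀) (tb : ℝ) (htb : B₀ ≤ r tb) :
    (B₀ - A₀) / Real.sqrt B₀ ≤ Real.sqrt (∫ t in (0:ℝ)..1, (N t) ^ 2) :=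
  stmt_5_general r r' Y N A₀ B₀ hAB hrper hNper hrpos hderiv hr'cont hNcont hY hnorm ta hta tb htb
end

section
/- Let ρ : Z → ℝ be C² on the cylinder Z = [s₀−σ⁻, s₀+σ⁺] × S¹ with Δρ ≥ −ν₀ wherever ρ ≥ ln R₀, for constants ν₀ ≥ 0 and R₀ ≥ 1. Fix ν > ν₀ and set χ(s,t) = ρ(s,t) + ν(s−s₀)²/2. If σ± ≤ σ₀ and ρ ≤ ln S on ∂Z, then sup_Z ρ ≤ ln max(R₀, S) + ν σ₀²/2. -/
/-!
The quadratic `ν (s - s₀)² / 2` is at most `ν σ₀² / 2` on the cylinder and adds `ν > ν₀` to the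
Laplacian. So `χ = ρ + ν (s - s₀)² / 2`, which attains its maximum on the cylinder by periodicity,
cannot do so at an interior point where `ρ ≥ ln R₀`, since there `Δχ > 0`; at the maximum point
either `ρ < ln R₀` or it lies on a boundary circle, where `ρ ≤ ln S`.
-/

open Set Filter Topology

/-- The flat Laplacian `Δ = ∂_s² + ∂_t²` of a function on `ℝ × ℝ`. -/
noncomputable def flatLaplacian (F : ℝ × ℝ → ℝ) (z : ℝ × ℝ) : ℝ :=
  deriv (fun s => deriv (fun s' => F (s', z.2)) s) z.1 +
    deriv (fun t => deriv (fun t' => F (z.1, t')) t) z.2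

lemma deriv_deriv_nonpos_of_isLocalMax {f : ℝ → ℝ} {x : ℝ} (hmax : IsLocalMax f x)
    (hf : ContinuousAt f x) : deriv (deriv f) x ≤ 0 := by
  by_contra! hpos
  -- A positive second derivative would make `x` a local minimum too, so `f` is locally constant.
  have hmin := isLocalMin_of_deriv_deriv_pos hpos hmax.deriv_eq_zero hf
  have hconst : f =ᶠ[𝓝 x] fun _ => f x :=
    (hmax.and hmin).mono fun _ hy => le_antisymm hy.1 hy.2
  have hderiv : deriv f =ᶠ[𝓝 x] fun _ => 0 :=
    hconst.eventuallyEq_nhds.mono fun _ hy => by rw [hy.deriv_eq, deriv_const]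
  rw [hderiv.deriv_eq, deriv_const] at hpos
  exact hpos.false

lemma flatLaplacian_nonpos_of_isLocalMax {F : ℝ × ℝ → ℝ} {w : ℝ × ℝ} (hmax : IsLocalMax F w)
    (hF : Continuous F) : flatLaplacian F w ≤ 0 := by
  unfold flatLaplacian
  have hs : IsLocalMax (fun s => F (s, w.2)) w.1 :=
    hmax.comp_continuous (g := fun s => (s, w.2)) (by fun_prop)
  have ht : IsLocalMax (fun t => F (w.1, t)) w.2 :=
    hmax.comp_continuous (g := fun t => (w.1, t)) (by fun_prop)
  exact add_nonpos (deriv_deriv_nonpos_of_isLocalMax hs (by fun_prop))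
    (deriv_deriv_nonpos_of_isLocalMax ht (by fun_prop))

lemma deriv_deriv_add {f g : ℝ → ℝ} (hf : ContDiff ℝ 2 f) (hg : ContDiff ℝ 2 g) (x : ℝ) :
    deriv (deriv fun y => f y + g y) x = deriv (deriv f) x + deriv (deriv g) x := by
  have hf' : ContDiff ℝ 1 (deriv f) := hf.deriv'
  have hg' : ContDiff ℝ 1 (deriv g) := hg.deriv'
  have hsum : (deriv fun y => f y + g y) = fun y => deriv f y + deriv g y := by
    funext y
    exact deriv_add (hf.differentiable two_ne_zero y) (hg.differentiable two_ne_zero y)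
  rw [hsum]
  exact deriv_add (hf'.differentiable one_ne_zero x) (hg'.differentiable one_ne_zero x)

lemma flatLaplacian_add {F G : ℝ × ℝ → ℝ} (hF : ContDiff ℝ 2 F) (hG : ContDiff ℝ 2 G)
    (z : ℝ × ℝ) : flatLaplacian (fun y => F y + G y) z = flatLaplacian F z + flatLaplacian G z := by
  have hs : ∀ H : ℝ × ℝ → ℝ, ContDiff ℝ 2 H → ContDiff ℝ 2 fun s => H (s, z.2) :=
    fun _ hH => hH.comp (by fun_prop)
  have ht : ∀ H : ℝ × ℝ → ℝ, ContDiff ℝ 2 H → ContDiff ℝ 2 fun t => H (z.1, t) :=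
    fun _ hH => hH.comp (by fun_prop)
  simp only [flatLaplacian]
  rw [deriv_deriv_add (hs F hF) (hs G hG), deriv_deriv_add (ht F hF) (ht G hG)]
  ring

lemma flatLaplacian_quadratic (ν s₀ : ℝ) (z : ℝ × ℝ) :
    flatLaplacian (fun y => ν * (y.1 - s₀) ^ 2 / 2) z = ν := by
  simp [flatLaplacian]

lemma exists_isMaxOn_Icc_prod_univ {F : ℝ × ℝ → ℝ} {p a b : ℝ} (hF : Continuous F)
    (hper : ∀ s, Function.Periodic (fun t => F (s, t)) p) (hp : 0 < p) (hab : a ≤ b) :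
    ∃ w ∈ Icc a b ×ˢ univ, IsMaxOn F (Icc a b ×ˢ univ) w := by
  obtain ⟨w, hw, hmax⟩ := (isCompact_Icc.prod (isCompact_Icc (a := 0) (b := p))).exists_isMaxOn
    ⟨(a, 0), ⟨left_mem_Icc.2 hab, left_mem_Icc.2 hp.le⟩⟩ hF.continuousOn
  refine ⟨w, ⟨hw.1, mem_univ _⟩, fun z hz => ?_⟩
  obtain ⟨t, ht, hzt⟩ := (hper z.1).exists_mem_Ico₀ hp z.2
  simpa [hzt] using hmax (show (z.1, t) ∈ _ from ⟨hz.1, Ico_subset_Icc_self ht⟩)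

theorem stmt_17_general (ρ : ℝ × ℝ → ℝ) (s₀ σm σp σ₀ ν₀ ν R₀ S : ℝ)
    (hρ : ContDiff ℝ 2 ρ)
    (hper : ∀ s t : ℝ, ρ (s, t + 1) = ρ (s, t))
    (hν₀ : 0 ≤ ν₀) (hR₀ : 1 ≤ R₀) (hS : 0 < S) (hν : ν₀ < ν)
    (hσm0 : σm ≤ σ₀) (hσp0 : σp ≤ σ₀)
    (hlap : ∀ z : ℝ × ℝ, z.1 ∈ Set.Icc (s₀ - σm) (s₀ + σp) →
      Real.log R₀ ≤ ρ z → -ν₀ ≤ flatLaplacian ρ z)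
    (hbdry : ∀ t : ℝ, ρ (s₀ - σm, t) ≤ Real.log S ∧ ρ (s₀ + σp, t) ≤ Real.log S) :
    ∀ z : ℝ × ℝ, z.1 ∈ Set.Icc (s₀ - σm) (s₀ + σp) →
      ρ z ≤ Real.log (max R₀ S) + ν * σ₀ ^ 2 / 2 := by
  intro z hz
  have hν_nonneg : 0 ≤ ν := hν₀.trans hν.le
  set q : ℝ × ℝ → ℝ := fun y => ν * (y.1 - s₀) ^ 2 / 2 with hq_def
  set χ : ℝ × ℝ → ℝ := fun y => ρ y + q y with hχ_def
  have hq_nonneg : ∀ y, 0 ≤ q y := fun y => by positivity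
  have hq_le : ∀ y : ℝ × ℝ, y.1 ∈ Icc (s₀ - σm) (s₀ + σp) → q y ≤ ν * σ₀ ^ 2 / 2 :=
    fun y hy => by
      have : (y.1 - s₀) ^ 2 ≤ σ₀ ^ 2 := sq_le_sq' (by linarith [hy.1]) (by linarith [hy.2])
      simp only [hq_def]; gcongr
  have hχ : ContDiff ℝ 2 χ := hρ.add (by fun_prop)
  obtain ⟨⟨s, t⟩, hw, hmax⟩ := exists_isMaxOn_Icc_prod_univ hχ.continuous
    (fun s t => by simp only [hχ_def, hq_def, hper]) one_pos (hz.1.trans hz.2)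
  have hρw : ρ (s, t) ≤ Real.log (max R₀ S) := by
    have hlogS : Real.log S ≤ Real.log (max R₀ S) := Real.log_le_log hS (le_max_right R₀ S)
    rcases eq_endpoints_or_mem_Ioo_of_mem_Icc (x := s) hw.1 with rfl | rfl | h
    · exact (hbdry t).1.trans hlogS
    · exact (hbdry t).2.trans hlogS
    · by_contra! hbig
      have hR : Real.log R₀ ≤ ρ (s, t) :=
        (Real.log_le_log (by linarith) (le_max_left R₀ S)).trans hbig.le
      have hloc : IsLocalMax χ (s, t) :=
        hmax.isLocalMax (prod_mem_nhds (Icc_mem_nhds h.1 h.2) univ_mem)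
      have hΔ := flatLaplacian_nonpos_of_isLocalMax hloc hχ.continuous
      rw [flatLaplacian_add hρ (by fun_prop), flatLaplacian_quadratic] at hΔ
      linarith [hlap (s, t) hw.1 hR]
  calc ρ z ≤ χ z := le_add_of_nonneg_right (hq_nonneg z)
    _ ≤ χ (s, t) := hmax ⟨hz, mem_univ _⟩
    _ ≤ Real.log (max R₀ S) + ν * σ₀ ^ 2 / 2 := add_le_add hρw (hq_le (s, t) hw.1)

/-- Proposition 4.4 (maximum principle with auxiliary quadratic): let `ρ` be
`C²` on the cylinder `Z = [s₀−σ⁻, s₀+σ⁺] × S¹` (a function on `ℝ × ℝ`,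
1-periodic in the second variable) with `Δρ ≥ −ν₀` wherever `ρ ≥ ln R₀`, for
constants `ν₀ ≥ 0`, `R₀ ≥ 1`. If `σ± ≤ σ₀`, `ν > ν₀` and `ρ ≤ ln S` on the
boundary circles, then `ρ ≤ ln max(R₀, S) + ν σ₀²/2` on `Z`. -/
theorem stmt_17 (ρ : ℝ × ℝ → ℝ) (s₀ σm σp σ₀ ν₀ ν R₀ S : ℝ)
    (hρ : ContDiff ℝ 2 ρ)
    (hper : ∀ s t : ℝ, ρ (s, t + 1) = ρ (s, t))
    (hν₀ : 0 ≤ ν₀) (hR₀ : 1 ≤ R₀) (hS : 0 < S) (hν : ν₀ < ν)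
    (hσm : 0 ≤ σm) (hσp : 0 ≤ σp) (hσm0 : σm ≤ σ₀) (hσp0 : σp ≤ σ₀)
    (hlap : ∀ z : ℝ × ℝ, z.1 ∈ Set.Icc (s₀ - σm) (s₀ + σp) →
      Real.log R₀ ≤ ρ z → -ν₀ ≤ flatLaplacian ρ z)
    (hbdry : ∀ t : ℝ, ρ (s₀ - σm, t) ≤ Real.log S ∧ ρ (s₀ + σp, t) ≤ Real.log S) :
    ∀ z : ℝ × ℝ, z.1 ∈ Set.Icc (s₀ - σm) (s₀ + σp) →
      ρ z ≤ Real.log (max R₀ S) + ν * σ₀ ^ 2 / 2 :=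
  stmt_17_general ρ s₀ σm σp σ₀ ν₀ ν R₀ S hρ hper hν₀ hR₀ hS hν hσm0 hσp0 hlap hbdry
end
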